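/- arXiv:2509.22436 — 3 statements merged into one kernel-verified Lean document; each statement's English description precedes it below -/
import Mathlib

section
/- (Euler method global error bound) Let f : ℝ^n × ℝ → ℝ^n be L-Lipschitz in the state variable, uniformly in time, and let x : [t₀, t₁] → ℝ^n solve ẋ = f(x, t) with ‖ẍ(t)‖ ≤ M on [t₀, t₁]. Let xₙ be the Euler iterates with step size h starting from x(t₀). Then ‖x(tₙ) − xₙ‖ ≤ (hM/(2L)) (e^{L(tₙ − t₀)} − 1). -/
/-!
Each Euler step commits a local error of at most `M h² / 2` (Taylor's bound with the bound on
`ẍ`) and, by the Lipschitz condition, amplifies the error already made by at most `1 + h L`.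
The resulting recursion `eₖ₊₁ ≤ (1 + h L) eₖ + M h² / 2` with `e₀ = 0` solves to
`eₖ ≤ (h M / 2L) ((1 + h L)ᵏ - 1)`, and `(1 + h L)ᵏ ≤ exp (k h L)`.
-/

open Set

theorem norm_sub_sub_smul_le_of_hasDerivAt {E : Type*} [NormedAddCommGroup E] [NormedSpace ℝ E]
    {x g x'' : ℝ → E} {a b M : ℝ} (hab : a ≤ b)
    (hx : ∀ t ∈ Icc a b, HasDerivAt x (g t) t)
    (hg : ∀ t ∈ Icc a b, HasDerivAt g (x'' t) t)
    (hM : ∀ t ∈ Icc a b, ‖x'' t‖ ≤ M) :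
    ‖x b - x a - (b - a) • g a‖ ≤ M * (b - a) ^ 2 / 2 := by
  set F : ℝ → E := fun s => x s - x a - (s - a) • g a
  have hF_cont : ContinuousOn F (Icc a b) :=
    ((HasDerivAt.continuousOn hx).sub continuousOn_const).sub (by fun_prop)
  have hF_deriv : ∀ s ∈ Ico a b, HasDerivWithinAt F (g s - g a) (Ici s) s := by
    intro s hs
    have hlin : HasDerivAt (fun s : ℝ => (s - a) • g a) (g a) s := by
      simpa using ((hasDerivAt_id s).sub_const a).smul_const (g a)
    exact (((hx s (Ico_subset_Icc_self hs)).sub_const (x a)).sub hlin).hasDerivWithinAt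
  have hB : ∀ s, HasDerivAt (fun s => M * (s - a) ^ 2 / 2) (M * (s - a)) s := fun s => by
    have := (((hasDerivAt_id s).sub_const a).fun_pow 2).const_mul M |>.div_const 2
    exact this.congr_deriv (by simp; ring)
  have hF_deriv_le : ∀ s ∈ Ico a b, ‖g s - g a‖ ≤ M * (s - a) := by
    intro s hs
    have := (convex_Icc a b).norm_image_sub_le_of_norm_hasDerivWithin_le
      (fun t ht => (hg t ht).hasDerivWithinAt) hM (left_mem_Icc.2 hab) (Ico_subset_Icc_self hs)
    rwa [Real.norm_of_nonneg (sub_nonneg.2 hs.1)] at this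
  simpa [F] using image_norm_le_of_norm_deriv_right_le_deriv_boundary hF_cont hF_deriv
    (by simp [F]) hB hF_deriv_le (right_mem_Icc.2 hab)

theorem norm_sub_euler_step_le {E : Type*} [NormedAddCommGroup E] [NormedSpace ℝ E]
    {f : E → ℝ → E} {x x'' : ℝ → E} {a h L M : ℝ} (y : E) (hh : 0 ≤ h)
    (hLip : ‖f (x a) a - f y a‖ ≤ L * ‖x a - y‖)
    (hode : ∀ t ∈ Icc a (a + h), HasDerivAt x (f (x t) t) t)
    (hx'' : ∀ t ∈ Icc a (a + h), HasDerivAt (fun s => f (x s) s) (x'' t) t)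
    (hM : ∀ t ∈ Icc a (a + h), ‖x'' t‖ ≤ M) :
    ‖x (a + h) - (y + h • f y a)‖ ≤ (1 + h * L) * ‖x a - y‖ + M * h ^ 2 / 2 := by
  have hlocal : ‖x (a + h) - x a - h • f (x a) a‖ ≤ M * h ^ 2 / 2 := by
    simpa using norm_sub_sub_smul_le_of_hasDerivAt (le_add_of_nonneg_right hh) hode hx'' hM
  have hprop : ‖(x a - y) + h • (f (x a) a - f y a)‖ ≤ (1 + h * L) * ‖x a - y‖ := by
    calc ‖(x a - y) + h • (f (x a) a - f y a)‖
        ≤ ‖x a - y‖ + h * ‖f (x a) a - f y a‖ := by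
          grw [norm_add_le, norm_smul, Real.norm_of_nonneg hh]
      _ ≤ (1 + h * L) * ‖x a - y‖ := by grw [hLip]; linarith
  calc ‖x (a + h) - (y + h • f y a)‖
      = ‖(x (a + h) - x a - h • f (x a) a) + ((x a - y) + h • (f (x a) a - f y a))‖ := by
        rw [smul_sub]; abel_nf
    _ ≤ (1 + h * L) * ‖x a - y‖ + M * h ^ 2 / 2 := by
        grw [norm_add_le, hlocal, hprop]; linarith

theorem le_mul_pow_sub_one_of_le_mul_add {e : ℕ → ℝ} {A C : ℝ} (hA : 0 ≤ A) {N : ℕ}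
    (h₀ : e 0 ≤ 0) (hrec : ∀ k < N, e (k + 1) ≤ A * e k + C * (A - 1)) :
    e N ≤ C * (A ^ N - 1) := by
  induction N with
  | zero => simpa using h₀
  | succ N ih =>
    calc e (N + 1) ≤ A * e N + C * (A - 1) := hrec N N.lt_succ_self
      _ ≤ A * (C * (A ^ N - 1)) + C * (A - 1) := by
          grw [ih fun k hk => hrec k (hk.trans N.lt_succ_self)]
      _ = C * (A ^ (N + 1) - 1) := by ring

theorem Real.one_add_pow_le_exp {x : ℝ} (hx : -1 ≤ x) (N : ℕ) :
    (1 + x) ^ N ≤ Real.exp (N * x) := by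
  calc (1 + x) ^ N ≤ Real.exp x ^ N := by
        gcongr
        · linarith
        · linarith [Real.add_one_le_exp x]
    _ = Real.exp (N * x) := (Real.exp_nat_mul x N).symm

/-- Global error bound for Euler's method. -/
theorem euler_method_global_error
    (n : ℕ) (f : EuclideanSpace ℝ (Fin n) → ℝ → EuclideanSpace ℝ (Fin n))
    (L M t₀ t₁ hstep : ℝ) (hL : 0 < L) (hM : 0 ≤ M) (hh : 0 < hstep)
    (hLip : ∀ t : ℝ, ∀ x y : EuclideanSpace ℝ (Fin n),
      ‖f x t - f y t‖ ≤ L * ‖x - y‖)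
    (x : ℝ → EuclideanSpace ℝ (Fin n))
    (hode : ∀ t ∈ Icc t₀ t₁, HasDerivAt x (f (x t) t) t)
    (x'' : ℝ → EuclideanSpace ℝ (Fin n))
    (hx'' : ∀ t ∈ Icc t₀ t₁, HasDerivAt (fun s => f (x s) s) (x'' t) t)
    (hM' : ∀ t ∈ Icc t₀ t₁, ‖x'' t‖ ≤ M)
    (xe : ℕ → EuclideanSpace ℝ (Fin n))
    (hxe0 : xe 0 = x t₀)
    (hxe : ∀ k : ℕ, xe (k + 1) = xe k + hstep • f (xe k) (t₀ + k * hstep)) :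
    ∀ k : ℕ, t₀ + k * hstep ≤ t₁ →
      ‖x (t₀ + k * hstep) - xe k‖ ≤
        hstep * M / (2 * L) * (Real.exp (L * (t₀ + k * hstep - t₀)) - 1) := by
  intro N hN
  set A := 1 + hstep * L
  set C := hstep * M / (2 * L)
  have hlocal : C * (A - 1) = M * hstep ^ 2 / 2 := by simp only [A, C]; field_simp; ring
  have herr : ‖x (t₀ + N * hstep) - xe N‖ ≤ C * (A ^ N - 1) := by
    refine le_mul_pow_sub_one_of_le_mul_add (e := fun k => ‖x (t₀ + k * hstep) - xe k‖)
      (by positivity) (by simp [hxe0]) fun k hk => ?_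
    have hsub : Icc (t₀ + k * hstep) (t₀ + k * hstep + hstep) ⊆ Icc t₀ t₁ := by
      have : ((k : ℝ) + 1) * hstep ≤ N * hstep := by gcongr; exact_mod_cast hk
      exact Icc_subset_Icc (le_add_of_nonneg_right (by positivity)) (by linarith)
    have hnext : t₀ + ((k + 1 : ℕ) : ℝ) * hstep = t₀ + k * hstep + hstep := by push_cast; ring
    simp only [hnext, hxe, hlocal]
    exact norm_sub_euler_step_le (xe k) hh.le (hLip _ _ _) (fun t ht => hode t (hsub ht))
      (fun t ht => hx'' t (hsub ht)) (fun t ht => hM' t (hsub ht))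
  calc ‖x (t₀ + N * hstep) - xe N‖ ≤ C * (A ^ N - 1) := herr
    _ ≤ C * (Real.exp (N * (hstep * L)) - 1) := by
        grw [Real.one_add_pow_le_exp (by nlinarith : -1 ≤ hstep * L) N]
    _ = C * (Real.exp (L * (t₀ + N * hstep - t₀)) - 1) := by ring_nf
end

section
/- Let f : [−1,1] → ℝ be given by a convergent power series f(ρ) = Σ_{n≥0} bₙ ρⁿ with all bₙ ≥ 0. If bₙ > 0 for infinitely many even n and infinitely many odd n, then for every d ≥ 1 and every finite set of distinct points x₁,…,x_N on the unit sphere S^{d−1}, the matrix K with K_{ij} = f(⟨x_i, x_j⟩) is strictly positive definite. -/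
/-!
The quadratic form `∑ cᵢ cⱼ f ⟪xᵢ, xⱼ⟫` equals `∑ₙ bₙ Gₙ` with `Gₙ = ∑ cᵢ cⱼ ⟪xᵢ, xⱼ⟫ⁿ ≥ 0`
(Schur product theorem), so it suffices to find `n` with `bₙ > 0` and `Gₙ > 0`. Pairs with
`|⟪xᵢ, xⱼ⟫| < 1` contribute `o(1)` to `Gₙ`, hence `Gₙ = A + (-1)ⁿ B + o(1)`, where `A = ∑ cᵢ² > 0`
comes from the diagonal (the points are distinct) and `B` from the antipodal pairs. Since
`(A + B) + (A - B) = 2A > 0`, one of `A ± B` is positive, and the infinitely many positive even,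
respectively odd, coefficients supply `n`.
-/

open Set Filter Topology

section PowerSums

open Finset

variable {ι : Type*} [Fintype ι] (w s : ι → ℝ)

lemma tendsto_sum_mul_pow_sub_of_abs_le_one (hs : ∀ p, |s p| ≤ 1) :
    Tendsto (fun n => ∑ p, w p * s p ^ n
      - (∑ p with s p = 1, w p + (-1) ^ n * ∑ p with s p = -1, w p)) atTop (𝓝 0) := by
  simp only [sum_filter, mul_sum, ← sum_add_distrib, ← sum_sub_distrib]
  rw [← sum_const_zero (s := (univ : Finset ι)) (M := ℝ)]
  refine tendsto_finsetSum _ fun p _ => ?_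
  by_cases h1 : s p = 1
  · norm_num [h1]
  by_cases h2 : s p = -1
  · norm_num [h2, mul_comm]
  have hlt : |s p| < 1 :=
    abs_lt.mpr ⟨(abs_le.mp (hs p)).1.lt_of_ne' h2, (abs_le.mp (hs p)).2.lt_of_ne h1⟩
  simpa [h1, h2] using (tendsto_pow_atTop_nhds_zero_of_abs_lt_one hlt).const_mul (w p)

lemma exists_sum_mul_pow_pos {P : ℕ → Prop} (hs : ∀ p, |s p| ≤ 1)
    (hw : 0 < ∑ p with s p = 1, w p)
    (heven : {n | Even n ∧ P n}.Infinite) (hodd : {n | Odd n ∧ P n}.Infinite) :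
    ∃ n, P n ∧ 0 < ∑ p, w p * s p ^ n := by
  set A := ∑ p with s p = 1, w p
  set B := ∑ p with s p = -1, w p
  have hlim := tendsto_sum_mul_pow_sub_of_abs_le_one w s hs
  have of_sign : ∀ σ : ℝ, 0 < A + σ * B → {n | (-1) ^ n = σ ∧ P n}.Infinite →
      ∃ n, P n ∧ 0 < ∑ p, w p * s p ^ n := by
    intro σ hpos hinf
    have hnear := hlim.eventually (Ioi_mem_nhds (neg_lt_zero.mpr hpos))
    obtain ⟨n, ⟨hσ, hP⟩, hn⟩ := (Nat.frequently_atTop_iff_infinite.mpr hinf).and_eventually hnear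
      |>.exists
    refine ⟨n, hP, ?_⟩
    simp only [hσ] at hn
    linarith
  by_cases hplus : 0 < A + B
  · exact of_sign 1 (by simpa using hplus) (heven.mono fun n hn => ⟨hn.1.neg_one_pow, hn.2⟩)
  · exact of_sign (-1) (by linarith) (hodd.mono fun n hn => ⟨hn.1.neg_one_pow, hn.2⟩)

end PowerSums

section InnerProductSpace

open Finset

variable {E : Type*} [NormedAddCommGroup E] [InnerProductSpace ℝ E] {ι : Type*} [Fintype ι]

lemma posSemidef_inner_pow (x : ι → E) (n : ℕ) :
    (Matrix.of fun i j => inner ℝ (x i) (x j) ^ n).PosSemidef := by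
  induction n with
  | zero => simpa [Matrix.vecMulVec] using Matrix.posSemidef_vecMulVec_self_star (1 : ι → ℝ)
  | succ n ih =>
    have h : (Matrix.of fun i j => inner ℝ (x i) (x j) ^ (n + 1))
        = (Matrix.of fun i j => inner ℝ (x i) (x j) ^ n).hadamard (Matrix.gram ℝ x) := by
      ext i j
      simp [Matrix.gram_apply, pow_succ]
    exact h ▸ ih.hadamard (Matrix.posSemidef_gram ℝ x)

lemma sum_mul_inner_pow_nonneg (x : ι → E) (c : ι → ℝ) (n : ℕ) :
    0 ≤ ∑ i, ∑ j, c i * c j * inner ℝ (x i) (x j) ^ n := by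
  calc 0 ≤ star c ⬝ᵥ (Matrix.of fun i j => inner ℝ (x i) (x j) ^ n).mulVec c :=
        (posSemidef_inner_pow x n).dotProduct_mulVec_nonneg c
    _ = _ := by simp [dotProduct, Matrix.mulVec, mul_sum, mul_assoc, mul_comm]

lemma sum_filter_inner_eq_one {x : ι → E} (hx : ∀ i, ‖x i‖ = 1) (hinj : Function.Injective x)
    (c : ι → ℝ) :
    ∑ p : ι × ι with inner ℝ (x p.1) (x p.2) = 1, c p.1 * c p.2 = ∑ i, c i ^ 2 := by
  classical
  have hdiag : ∀ p : ι × ι, inner ℝ (x p.1) (x p.2) = (1 : ℝ) ↔ p.1 = p.2 := fun p =>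
    (inner_eq_one_iff_of_norm_eq_one (hx _) (hx _)).trans hinj.eq_iff
  rw [filter_congr fun p _ => hdiag p, sum_filter, Fintype.sum_prod_type]
  simp [sq]

theorem sum_mul_apply_inner_pos {f : ℝ → ℝ} {b : ℕ → ℝ} (hb : ∀ n, 0 ≤ b n)
    (hsum : ∀ ρ ∈ Icc (-1 : ℝ) 1, HasSum (fun n => b n * ρ ^ n) (f ρ))
    (heven : {n | Even n ∧ 0 < b n}.Infinite) (hodd : {n | Odd n ∧ 0 < b n}.Infinite)
    {x : ι → E} (hx : ∀ i, ‖x i‖ = 1) (hinj : Function.Injective x) {c : ι → ℝ} (hc : c ≠ 0) :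
    0 < ∑ i, ∑ j, c i * c j * f (inner ℝ (x i) (x j)) := by
  set s : ι × ι → ℝ := fun p => inner ℝ (x p.1) (x p.2)
  have hs : ∀ p, |s p| ≤ 1 := fun p => by
    simpa [hx] using abs_real_inner_le_norm (x p.1) (x p.2)
  have hdiag : 0 < ∑ p with s p = 1, c p.1 * c p.2 := by
    obtain ⟨i, hi⟩ := Function.ne_iff.mp hc
    rw [sum_filter_inner_eq_one hx hinj]
    exact sum_pos' (fun j _ => sq_nonneg _) ⟨i, mem_univ i, sq_pos_of_ne_zero hi⟩
  obtain ⟨n, hbn, hpos⟩ := exists_sum_mul_pow_pos (fun p => c p.1 * c p.2) s hs hdiag heven hodd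
  have hser : HasSum (fun n => b n * ∑ p, c p.1 * c p.2 * s p ^ n)
      (∑ p, c p.1 * c p.2 * f (s p)) := by
    refine (hasSum_sum fun p _ => (hsum (s p) (abs_le.mp (hs p))).mul_left (c p.1 * c p.2))
      |>.congr_fun fun n => ?_
    rw [mul_sum]
    exact sum_congr rfl fun p _ => by ring
  have hnonneg : ∀ m, 0 ≤ ∑ p, c p.1 * c p.2 * s p ^ m := fun m => by
    simpa only [Fintype.sum_prod_type] using sum_mul_inner_pow_nonneg x c m
  rw [← Fintype.sum_prod_type']
  exact (mul_pos hbn hpos).trans_le (le_hasSum hser n fun m _ => mul_nonneg (hb m) (hnonneg m))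

end InnerProductSpace

/-- Gneiting/Jacot criterion: a dot-product kernel `f(⟨x,y⟩) = Σ bₙ ρⁿ` with
nonnegative coefficients, infinitely many positive even and odd ones, is strictly
positive definite on the unit sphere in every dimension `d ≥ 1`. -/
theorem dot_product_kernel_strictly_positive_definite
    (f : ℝ → ℝ) (b : ℕ → ℝ) (hb : ∀ n, 0 ≤ b n)
    (hsum : ∀ ρ ∈ Icc (-1 : ℝ) 1, HasSum (fun n => b n * ρ ^ n) (f ρ))
    (heven : {n : ℕ | Even n ∧ 0 < b n}.Infinite)
    (hodd : {n : ℕ | Odd n ∧ 0 < b n}.Infinite) :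
    ∀ d : ℕ, 1 ≤ d → ∀ N : ℕ, ∀ x : Fin N → EuclideanSpace ℝ (Fin d),
      (∀ i, ‖x i‖ = 1) → Function.Injective x →
      ∀ c : Fin N → ℝ, c ≠ 0 →
        0 < ∑ i, ∑ j, c i * c j * f (inner ℝ (x i) (x j) : ℝ) :=
  fun _ _ _ _ hx hinj _ hc => sum_mul_apply_inner_pos hb hsum heven hodd hx hinj hc
end

section
/- Let ‖·‖ be a norm, λ₀ > 0, η with 0 < ηλ₀² ≤ 1, and suppose a sequence of residuals rₖ ∈ ℝ^N satisfies ‖r_{k+1}‖ ≤ (1 − ηλ₀²/4)‖rₖ‖ + η²D‖rₖ‖² for a constant D > 0 with ηD‖r₀‖ ≤ λ₀²/8. Then ‖rₖ‖ ≤ (1 − ηλ₀²/8)ᵏ ‖r₀‖ for all k ≥ 0. -/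
/-- Abstract linear-convergence lemma: the quadratic error term is absorbed into
the linear contraction provided the initial residual is small. -/
theorem residual_linear_convergence
    (N : ℕ) (r : ℕ → EuclideanSpace ℝ (Fin N)) (η lam₀ D : ℝ)
    (hη : 0 < η) (hlam : 0 < lam₀) (hηlam : η * lam₀ ^ 2 ≤ 1) (hD : 0 < D)
    (hrec : ∀ k : ℕ,
      ‖r (k + 1)‖ ≤ (1 - η * lam₀ ^ 2 / 4) * ‖r k‖ + η ^ 2 * D * ‖r k‖ ^ 2)
    (hinit : η * D * ‖r 0‖ ≤ lam₀ ^ 2 / 8) :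
    ∀ k : ℕ, ‖r k‖ ≤ (1 - η * lam₀ ^ 2 / 8) ^ k * ‖r 0‖ := by
  have hc0 : (0:ℝ) ≤ 1 - η * lam₀ ^ 2 / 8 := by nlinarith
  have hc1 : 1 - η * lam₀ ^ 2 / 8 ≤ 1 := by nlinarith [sq_nonneg lam₀]
  intro k
  induction k with
  | zero => simp
  | succ k ih =>
    have hrk0 : (0:ℝ) ≤ ‖r k‖ := norm_nonneg _
    have hle : ‖r k‖ ≤ ‖r 0‖ := by
      calc ‖r k‖ ≤ (1 - η * lam₀ ^ 2 / 8) ^ k * ‖r 0‖ := ih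
        _ ≤ 1 * ‖r 0‖ := by
            apply mul_le_mul_of_nonneg_right _ (norm_nonneg _)
            exact pow_le_one₀ hc0 hc1
        _ = ‖r 0‖ := one_mul _
    have key : ‖r (k + 1)‖ ≤ (1 - η * lam₀ ^ 2 / 8) * ‖r k‖ := by
      calc ‖r (k + 1)‖ ≤ (1 - η * lam₀ ^ 2 / 4) * ‖r k‖ + η ^ 2 * D * ‖r k‖ ^ 2 :=
            hrec k
        _ ≤ (1 - η * lam₀ ^ 2 / 8) * ‖r k‖ := by nlinarith [mul_le_mul_of_nonneg_left hinit (mul_nonneg hη.le hrk0), mul_le_mul_of_nonneg_left hle (mul_nonneg (mul_nonneg (sq_nonneg η) hD.le) hrk0)]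
    calc ‖r (k + 1)‖ ≤ (1 - η * lam₀ ^ 2 / 8) * ‖r k‖ := key
      _ ≤ (1 - η * lam₀ ^ 2 / 8) * ((1 - η * lam₀ ^ 2 / 8) ^ k * ‖r 0‖) :=
          mul_le_mul_of_nonneg_left ih hc0
      _ = (1 - η * lam₀ ^ 2 / 8) ^ (k + 1) * ‖r 0‖ := by ring
end
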